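/- Let H be a complex Hilbert space and let R = (R_1,…,R_d) be a commuting d-tuple of bounded linear operators on H that is (m,n)-isosymmetric (Λ_{m,n}(R) = 0), with m, n positive integers. Let μ = (μ_1,…,μ_d) and μ′ = (μ′_1,…,μ′_d) in ℂ^d satisfy Σ_{j=1}^{d} μ_j · conj(μ′_j) ≠ 1 and Σ_{j=1}^{d} (μ_j − conj(μ′_j)) ≠ 0. If u, v ∈ H satisfy R_j u = μ_j u and R_j v = μ′_j v for every j = 1,…,d, then ⟨u, v⟩ = 0. -/

import Mathlib

/-!
Pair `Λ_{m,n}(R) v` with `u`. Every `R_j` acting on `v` contributes the factor `μ'_j`, and every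
`R_j*` can be moved onto `u` as `R_j`, contributing `conj μ_j`. The multinomial and binomial
theorems then collapse the sums defining `M_m` and `Λ_{m,n}`:
`⟪u, Λ_{m,n}(R) v⟫ = (conj (Σ μ_j) - Σ μ'_j)^n (Σ conj μ_j μ'_j - 1)^m ⟪u, v⟫`,
and both scalar factors are conjugates of the quantities assumed nonzero.
-/

open Finset ContinuousLinearMap
open scoped InnerProductSpace

variable {H : Type*} [NormedAddCommGroup H] [InnerProductSpace ℂ H] [CompleteSpace H]

/-- `R^γ = R_1^{γ_1} ⋯ R_d^{γ_d}` for a multi-index `γ`. -/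
noncomputable def opPow {d : ℕ} (R : Fin d → H →L[ℂ] H) (γ : Fin d → ℕ) : H →L[ℂ] H :=
  (List.ofFn fun i => (R i) ^ (γ i)).prod

/-- `M_m(R) = Σ_{k=0}^{m} (−1)^{m−k} C(m,k) Σ_{|γ|=k} (k!/γ!) R*^γ R^γ`. -/
noncomputable def Mop {d : ℕ} (R : Fin d → H →L[ℂ] H) (m : ℕ) : H →L[ℂ] H :=
  ∑ k ∈ Finset.range (m + 1), ((-1 : ℂ) ^ (m - k) * (m.choose k : ℂ)) •
    ∑ γ ∈ Finset.Nat.antidiagonalTuple d k,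
      ((Nat.multinomial Finset.univ γ : ℕ) : ℂ) •
        (opPow (fun i => ContinuousLinearMap.adjoint (R i)) γ * opPow R γ)

/-- `S_n(R) = Σ_{k=0}^{n} (−1)^{n−k} C(n,k) (R_1*+⋯+R_d*)^k (R_1+⋯+R_d)^{n−k}`. -/
noncomputable def Sop {d : ℕ} (R : Fin d → H →L[ℂ] H) (n : ℕ) : H →L[ℂ] H :=
  ∑ k ∈ Finset.range (n + 1), ((-1 : ℂ) ^ (n - k) * (n.choose k : ℂ)) •
    ((∑ i, ContinuousLinearMap.adjoint (R i)) ^ k * (∑ i, R i) ^ (n - k))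

/-- `Λ_{m,n}(R) = Σ_{k=0}^{n} (−1)^{n−k} C(n,k) (R_1*+⋯+R_d*)^k M_m(R) (R_1+⋯+R_d)^{n−k}`. -/
noncomputable def Lam {d : ℕ} (R : Fin d → H →L[ℂ] H) (m n : ℕ) : H →L[ℂ] H :=
  ∑ k ∈ Finset.range (n + 1), ((-1 : ℂ) ^ (n - k) * (n.choose k : ℂ)) •
    ((∑ i, ContinuousLinearMap.adjoint (R i)) ^ k * Mop R m * (∑ i, R i) ^ (n - k))

theorem ContinuousLinearMap.pow_apply_of_apply_eq_smul {R M : Type*} [CommSemiring R]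
    [AddCommMonoid M] [Module R M] [TopologicalSpace M] {A : M →L[R] M} {c : R} {x : M}
    (hx : A x = c • x) (k : ℕ) : (A ^ k) x = c ^ k • x := by
  induction k with
  | zero => simp
  | succ k ih => rw [pow_succ', mul_apply_eq_comp, ih, map_smul, hx, smul_smul, pow_succ]

theorem Finset.sum_range_neg_one_pow_mul_choose_mul_pow {R : Type*} [CommRing R] (x y : R)
    (n : ℕ) : ∑ k ∈ range (n + 1), (-1) ^ (n - k) * (n.choose k : R) * (x ^ k * y ^ (n - k))
      = (x - y) ^ n := by
  rw [sub_eq_add_neg, add_pow]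
  exact sum_congr rfl fun k _ => by rw [neg_pow]; ring

theorem Finset.sum_antidiagonalTuple_multinomial_mul_prod_pow {R : Type*} [CommSemiring R]
    {d : ℕ} (x : Fin d → R) (k : ℕ) :
    ∑ γ ∈ Nat.antidiagonalTuple d k, (Nat.multinomial univ γ : R) * ∏ i, x i ^ γ i
      = (∑ i, x i) ^ k := by
  rw [sum_pow_eq_sum_piAntidiag, piAntidiag_univ_fin_eq_antidiagonalTuple]

theorem inner_adjoint_pow_apply_of_apply_eq_smul {A : H →L[ℂ] H} {c : ℂ} {u : H}
    (hu : A u = c • u) (k : ℕ) (x : H) :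
    ⟪u, (adjoint A ^ k) x⟫_ℂ = starRingEnd ℂ c ^ k * ⟪u, x⟫_ℂ := by
  rw [← star_eq_adjoint, ← star_pow, star_eq_adjoint, adjoint_inner_right,
    pow_apply_of_apply_eq_smul hu, inner_smul_left, map_pow]

omit [CompleteSpace H] in
theorem opPow_succ {d : ℕ} (R : Fin (d + 1) → H →L[ℂ] H) (γ : Fin (d + 1) → ℕ) :
    opPow R γ = R 0 ^ γ 0 * opPow (fun i => R i.succ) (fun i => γ i.succ) := by
  simp only [opPow, List.ofFn_succ, List.prod_cons]

section JointEigenvectors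

variable {d : ℕ} {R : Fin d → H →L[ℂ] H} {μ μ' : Fin d → ℂ} {u v : H}

omit [CompleteSpace H] in
theorem opPow_apply_of_forall_apply_eq_smul (hv : ∀ j, R j v = μ j • v) (γ : Fin d → ℕ) :
    opPow R γ v = (∏ i, μ i ^ γ i) • v := by
  induction d with
  | zero => simp [opPow]
  | succ d ih =>
    rw [opPow_succ, mul_apply_eq_comp, ih (fun j => hv j.succ),
      map_smul, pow_apply_of_apply_eq_smul (hv 0), smul_smul, Fin.prod_univ_succ, mul_comm]

theorem inner_opPow_adjoint_apply (hu : ∀ j, R j u = μ j • u) (γ : Fin d → ℕ) (x : H) :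
    ⟪u, opPow (fun i => adjoint (R i)) γ x⟫_ℂ
      = starRingEnd ℂ (∏ i, μ i ^ γ i) * ⟪u, x⟫_ℂ := by
  induction d generalizing x with
  | zero => simp [opPow]
  | succ d ih =>
    rw [opPow_succ, mul_apply_eq_comp, inner_adjoint_pow_apply_of_apply_eq_smul (hu 0),
      ih (fun j => hu j.succ), Fin.prod_univ_succ, map_mul, map_pow, mul_assoc]

theorem inner_Mop_apply (hu : ∀ j, R j u = μ j • u) (hv : ∀ j, R j v = μ' j • v) (m : ℕ) :
    ⟪u, Mop R m v⟫_ℂ = ((∑ j, starRingEnd ℂ (μ j) * μ' j) - 1) ^ m * ⟪u, v⟫_ℂ := by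
  have hterm (γ : Fin d → ℕ) :
      ⟪u, (opPow (fun i => adjoint (R i)) γ * opPow R γ) v⟫_ℂ
        = (∏ i, (starRingEnd ℂ (μ i) * μ' i) ^ γ i) * ⟪u, v⟫_ℂ := by
    rw [mul_apply_eq_comp, opPow_apply_of_forall_apply_eq_smul hv, map_smul,
      inner_smul_right, inner_opPow_adjoint_apply hu, map_prod]
    simp only [map_pow, mul_pow, prod_mul_distrib]
    ring
  simp only [Mop, _root_.sum_apply, smul_apply, inner_sum, inner_smul_right, hterm, ← mul_assoc,
    ← sum_mul, sum_antidiagonalTuple_multinomial_mul_prod_pow]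
  rw [← sum_range_neg_one_pow_mul_choose_mul_pow _ 1 m]
  simp only [one_pow, mul_one]

theorem inner_Lam_apply (hu : ∀ j, R j u = μ j • u) (hv : ∀ j, R j v = μ' j • v) (m n : ℕ) :
    ⟪u, Lam R m n v⟫_ℂ = (starRingEnd ℂ (∑ j, μ j) - ∑ j, μ' j) ^ n
      * ((∑ j, starRingEnd ℂ (μ j) * μ' j) - 1) ^ m * ⟪u, v⟫_ℂ := by
  have hsum_u : (∑ i, R i) u = (∑ j, μ j) • u := by simp only [_root_.sum_apply, hu, sum_smul]
  have hsum_v : (∑ i, R i) v = (∑ j, μ' j) • v := by simp only [_root_.sum_apply, hv, sum_smul]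
  have hterm (k l : ℕ) : ⟪u, ((∑ i, adjoint (R i)) ^ k * Mop R m * (∑ i, R i) ^ l) v⟫_ℂ
      = starRingEnd ℂ (∑ j, μ j) ^ k * (∑ j, μ' j) ^ l * ⟪u, Mop R m v⟫_ℂ := by
    rw [mul_apply_eq_comp, mul_apply_eq_comp, pow_apply_of_apply_eq_smul hsum_v, map_smul,
      map_smul, inner_smul_right, ← map_sum, inner_adjoint_pow_apply_of_apply_eq_smul hsum_u]
    ring
  simp only [Lam, _root_.sum_apply, smul_apply, inner_sum, inner_smul_right, hterm,
    inner_Mop_apply hu hv]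
  rw [← sum_range_neg_one_pow_mul_choose_mul_pow (starRingEnd ℂ (∑ j, μ j)), sum_mul, sum_mul]
  exact sum_congr rfl fun k _ => by ring

end JointEigenvectors

theorem eigenvectors_orthogonal_general {d : ℕ} (R : Fin d → H →L[ℂ] H)
    (m n : ℕ)
    (hiso : Lam R m n = 0) (μ μ' : Fin d → ℂ)
    (h1 : ∑ j, μ j * (starRingEnd ℂ) (μ' j) ≠ 1)
    (h2 : ∑ j, (μ j - (starRingEnd ℂ) (μ' j)) ≠ 0)
    (u v : H) (hu : ∀ j, R j u = μ j • u) (hv : ∀ j, R j v = μ' j • v) :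
    (⟪u, v⟫_ℂ : ℂ) = 0 := by
  have hsum : starRingEnd ℂ (∑ j, μ j) - ∑ j, μ' j
      = starRingEnd ℂ (∑ j, (μ j - starRingEnd ℂ (μ' j))) := by
    simp [map_sum, sum_sub_distrib]
  have hmul : (∑ j, starRingEnd ℂ (μ j) * μ' j) - 1
      = starRingEnd ℂ (∑ j, μ j * starRingEnd ℂ (μ' j) - 1) := by
    simp [map_sum]
  have hLam := inner_Lam_apply hu hv m n
  rw [hiso, zero_apply, inner_zero_right, hsum, hmul] at hLam
  refine (mul_eq_zero.mp hLam.symm).resolve_left (mul_ne_zero ?_ ?_)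
  · exact pow_ne_zero _ ((map_ne_zero _).mpr h2)
  · exact pow_ne_zero _ ((map_ne_zero _).mpr (sub_ne_zero.mpr h1))

/-- orthogonality of joint eigenvectors of an `(m,n)`-isosymmetric
multioperator. -/
theorem eigenvectors_orthogonal {d : ℕ} (R : Fin d → H →L[ℂ] H)
    (hcomm : ∀ i j, Commute (R i) (R j)) (m n : ℕ) (hm : 0 < m) (hn : 0 < n)
    (hiso : Lam R m n = 0) (μ μ' : Fin d → ℂ)
    (h1 : ∑ j, μ j * (starRingEnd ℂ) (μ' j) ≠ 1)
    (h2 : ∑ j, (μ j - (starRingEnd ℂ) (μ' j)) ≠ 0)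
    (u v : H) (hu : ∀ j, R j u = μ j • u) (hv : ∀ j, R j v = μ' j • v) :
    (⟪u, v⟫_ℂ : ℂ) = 0 :=
  eigenvectors_orthogonal_general R m n hiso μ μ' h1 h2 u v hu hv
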